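/- arXiv:1802.07636 — 6 statements merged into one kernel-verified Lean document; each statement's English description precedes it below -/
import Mathlib

section
/- For any group G, elements x, y ∈ G, and n ≥ 1, the commutator [x^(2^n), y] equals [x, x, x², x⁴, …, x^(2^(n-1)), y] · [x, x², …, x^(2^(n-1)), y]² · [x², …, x^(2^(n-1)), y]² ⋯ [x^(2^(n-1)), y]², where the iterated commutator [x₁, x₂, …, x_k] denotes [x₁, [x₂, [..., x_k]]]. -/
open scoped commutatorElement

theorem commutatorElement_sq_left {G : Type*} [Group G] (a b : G) :
    ⁅a ^ 2, b⁆ = ⁅a, ⁅a, b⁆⁆ * ⁅a, b⁆ ^ 2 := by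
  simp only [commutatorElement_def, pow_two]
  group

/-- Here `h j = [x^{2^j}, x^{2^{j+1}}, …, x^{2^{m-1}}, h m]`; each doubling of the exponent
splits off one square by `commutatorElement_sq_left`. -/
theorem commutatorElement_pow_two_pow_left {G : Type*} [Group G] (x : G) (h : ℕ → G) (m : ℕ)
    (hh : ∀ j < m, h j = ⁅x ^ 2 ^ j, h (j + 1)⁆) :
    ⁅x ^ 2 ^ m, h m⁆ = ⁅x, h 0⁆ * ((List.range m).map fun j => h j ^ 2).prod := by
  induction m with
  | zero => simp
  | succ m ih =>
    calc ⁅x ^ 2 ^ (m + 1), h (m + 1)⁆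
        = ⁅x ^ 2 ^ m, ⁅x ^ 2 ^ m, h (m + 1)⁆⁆ * ⁅x ^ 2 ^ m, h (m + 1)⁆ ^ 2 := by
          rw [pow_succ, pow_mul, commutatorElement_sq_left]
      _ = ⁅x ^ 2 ^ m, h m⁆ * h m ^ 2 := by rw [← hh m m.lt_succ_self]
      _ = ⁅x, h 0⁆ * ((List.range (m + 1)).map fun j => h j ^ 2).prod := by
          rw [ih fun j hj => hh j (by omega), List.range_succ, List.map_append,
            List.prod_append, List.map_singleton, List.prod_singleton, mul_assoc]

theorem commutator_two_pow_general (G : Type*) [Group G] (x y : G) (n : ℕ)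
    (g : ℕ → G) (hg0 : g 0 = y)
    (hg : ∀ k, k < n → g (k + 1) = ⁅x ^ 2 ^ (n - k - 1), g k⁆) :
    ⁅x ^ 2 ^ n, y⁆ =
      ⁅x, g n⁆ * ((List.range n).map fun j => (g (n - j)) ^ 2).prod := by
  have hnested : ∀ j < n, g (n - j) = ⁅x ^ 2 ^ j, g (n - (j + 1))⁆ := fun j hj => by
    have := hg (n - j - 1) (by omega)
    rwa [show n - j - 1 + 1 = n - j by omega, show n - (n - j - 1) - 1 = j by omega] at this
  have := commutatorElement_pow_two_pow_left x (fun j => g (n - j)) n hnested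
  simpa only [Nat.sub_self, Nat.sub_zero, hg0] using this

/-- Lemma 3.1 of the paper: for `n ≥ 1`,
`[x^{2^n}, y] = [x, x, x², …, x^{2^{n-1}}, y] · [x, x², …, x^{2^{n-1}}, y]² ⋯ [x^{2^{n-1}}, y]²`,
where `g k` denotes the right-nested iterated commutator of the last `k` entries,
i.e. `g 0 = y` and `g (k+1) = ⁅x^{2^{n-k-1}}, g k⁆`, so that
`g (n - j) = [x^{2^j}, …, x^{2^{n-1}}, y]`. -/
theorem commutator_two_pow (G : Type*) [Group G] (x y : G) (n : ℕ) (hn : 1 ≤ n)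
    (g : ℕ → G) (hg0 : g 0 = y)
    (hg : ∀ k, k < n → g (k + 1) = ⁅x ^ 2 ^ (n - k - 1), g k⁆) :
    ⁅x ^ 2 ^ n, y⁆ =
      ⁅x, g n⁆ * ((List.range n).map fun j => (g (n - j)) ^ 2).prod :=
  commutator_two_pow_general G x y n g hg0 hg
end

section
/- Let H and G be groups, let φ: G → Aut(H) be an action, and define K₂ = ⟨φ(g)(h)·h⁻¹ : g ∈ G, h ∈ H⟩. Then the commutator subgroup of the semidirect product H ⋊_φ G satisfies Γ₂(H ⋊_φ G) = L₂ ⋊_φ Γ₂(G), where L₂ = ⟨K₂, [H, H]⟩ (a subgroup of H), provided φ restricts to an action of Γ₂(G) on L₂. -/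
/-!
Since `L₂ ⊇ [H, H]`, it is normal with abelian quotient, and since `L₂ ⊇ K₂`, `φ` acts trivially
on `H ⧸ L₂`; so `p ↦ ⟦p.left⟧` is a homomorphism onto an abelian group, as is `p ↦ p.right` onto
`G ⧸ Γ₂(G)`. Hence a commutator `p = inl p.left * inr p.right` has `p.left ∈ L₂` and
`p.right ∈ Γ₂(G)`. Conversely `inl (φ g h * h⁻¹) = ⁅inr g, inl h⁆`, and `inl`, `inr` carry
commutators to commutators.
-/

open scoped commutatorElement

theorem Subgroup.map_commutator_le {G G' : Type*} [Group G] [Group G'] (f : G →* G') :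
    (_root_.commutator G).map f ≤ _root_.commutator G' := by
  rw [_root_.commutator_def, map_commutator]
  exact commutator_mono le_top le_top

namespace SemidirectProduct

variable {N G : Type*} [Group N] [Group G] {φ : G →* MulAut N}

theorem commutatorElement_inr_inl (g : G) (n : N) :
    ⁅(inr g : N ⋊[φ] G), (inl n : N ⋊[φ] G)⁆ = inl (φ g n * n⁻¹) := by
  rw [map_mul, inl_aut, commutatorElement_def]
  simp

theorem mem_map_inl_sup_map_inr {L : Subgroup N} {K : Subgroup G} {x : N ⋊[φ] G}
    (hl : x.left ∈ L) (hr : x.right ∈ K) : x ∈ L.map inl ⊔ K.map inr := by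
  rw [← inl_left_mul_inr_right x]
  exact mul_mem (Subgroup.mem_sup_left ⟨_, hl, rfl⟩) (Subgroup.mem_sup_right ⟨_, hr, rfl⟩)

def quotientLeftHom (L : Subgroup N) [L.Normal] (hφ : ∀ g n, φ g n * n⁻¹ ∈ L) :
    N ⋊[φ] G →* N ⧸ L :=
  lift (QuotientGroup.mk' L) 1 fun g => by
    ext n
    simpa [QuotientGroup.eq_iff_div_mem, div_eq_mul_inv] using hφ g n

theorem quotientLeftHom_apply (L : Subgroup N) [L.Normal] (hφ : ∀ g n, φ g n * n⁻¹ ∈ L)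
    (x : N ⋊[φ] G) : quotientLeftHom L hφ x = x.left := by
  simp [quotientLeftHom, lift]

theorem commutator_le_map_inl_sup_map_inr {L : Subgroup N} (hL : commutator N ≤ L)
    (hφ : ∀ g n, φ g n * n⁻¹ ∈ L) :
    commutator (N ⋊[φ] G) ≤ L.map inl ⊔ (commutator G).map inr := by
  have := Subgroup.Normal.of_commutator_le N hL
  rw [commutator_def, Subgroup.commutator_le]
  intro p _ q _
  apply mem_map_inl_sup_map_inr
  · have hquot : (⁅p, q⁆.left : N ⧸ L) = (⁅p.left, q.left⁆ : N) :=
      calc (⁅p, q⁆.left : N ⧸ L)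
          = ⁅quotientLeftHom L hφ p, quotientLeftHom L hφ q⁆ := by
            rw [← quotientLeftHom_apply L hφ, map_commutatorElement]
        _ = QuotientGroup.mk' L ⁅p.left, q.left⁆ := by
            rw [quotientLeftHom_apply, quotientLeftHom_apply, map_commutatorElement]; rfl
    rw [← QuotientGroup.eq_one_iff, hquot, QuotientGroup.eq_one_iff]
    exact hL (Subgroup.commutator_mem_commutator trivial trivial)
  · rw [← rightHom_eq_right, map_commutatorElement]
    exact Subgroup.commutator_mem_commutator trivial trivial

theorem map_inl_sup_map_inr_le_commutator :
    (Subgroup.closure {x | ∃ (g : G) (n : N), x = φ g n * n⁻¹} ⊔ commutator N).map inl ⊔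
      (commutator G).map inr ≤ commutator (N ⋊[φ] G) := by
  refine sup_le ?_ (Subgroup.map_commutator_le inr)
  rw [Subgroup.map_sup]
  refine sup_le ?_ (Subgroup.map_commutator_le inl)
  rw [Subgroup.map_le_iff_le_comap, Subgroup.closure_le]
  rintro _ ⟨g, n, rfl⟩
  rw [SetLike.mem_coe, Subgroup.mem_comap, ← commutatorElement_inr_inl]
  exact Subgroup.commutator_mem_commutator trivial trivial

end SemidirectProduct

theorem commutator_semidirectProduct_general {H G : Type*} [Group H] [Group G]
    (φ : G →* MulAut H)
    (K₂ : Subgroup H)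
    (hK₂ : K₂ = Subgroup.closure {x : H | ∃ (g : G) (h : H), x = φ g h * h⁻¹})
    (L₂ : Subgroup H)
    (hL₂ : L₂ = K₂ ⊔ ⁅(⊤ : Subgroup H), (⊤ : Subgroup H)⁆) :
    commutator (H ⋊[φ] G) =
      L₂.map SemidirectProduct.inl ⊔ (commutator G).map SemidirectProduct.inr := by
  subst hK₂ hL₂
  refine le_antisymm (SemidirectProduct.commutator_le_map_inl_sup_map_inr le_sup_right ?_)
    SemidirectProduct.map_inl_sup_map_inr_le_commutator
  exact fun g h => Subgroup.mem_sup_left (Subgroup.subset_closure ⟨g, h, rfl⟩)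

/-- The commutator subgroup of a semidirect product:
`Γ₂(H ⋊_φ G) = L₂ ⋊_φ Γ₂(G)` where `L₂ = ⟨K₂, [H, H]⟩` and
`K₂ = ⟨φ(g)(h)·h⁻¹ : g ∈ G, h ∈ H⟩`, provided `φ` restricts to an action of
`Γ₂(G)` on `L₂`. -/
theorem commutator_semidirectProduct {H G : Type*} [Group H] [Group G]
    (φ : G →* MulAut H)
    (K₂ : Subgroup H)
    (hK₂ : K₂ = Subgroup.closure {x : H | ∃ (g : G) (h : H), x = φ g h * h⁻¹})
    (L₂ : Subgroup H)
    (hL₂ : L₂ = K₂ ⊔ ⁅(⊤ : Subgroup H), (⊤ : Subgroup H)⁆)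
    (hact : ∀ g ∈ commutator G, ∀ h ∈ L₂, φ g h ∈ L₂) :
    commutator (H ⋊[φ] G) =
      L₂.map SemidirectProduct.inl ⊔ (commutator G).map SemidirectProduct.inr :=
  commutator_semidirectProduct_general φ K₂ hK₂ L₂ hL₂
end

section
/- Let H, G be groups with action φ: G → Aut(H), and define L₁ = H and, for n ≥ 2, K_n = ⟨φ(g)(h)h⁻¹ : g ∈ Γ_{n−1}(G), h ∈ H⟩, H_n = ⟨φ(g)(h)h⁻¹ : g ∈ G, h ∈ L_{n−1}⟩, L_n = ⟨K_n, H_n, [H, L_{n−1}]⟩. Then each L_n is a normal subgroup of H, and L_{n+1} ⊆ L_n for all n. -/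
/-!
The three generating sets of `L_{n+1}` are monotone in `L_n` and in `Γ_n(G)`, and the lower
central series decreases, so `L_{n+1} ≤ L_n` follows by induction on `n`.
Normality then comes for free: `L_{n+1}` contains `[H, L_n] ⊇ [H, L_{n+1}]`,
and a subgroup containing its commutator with `H` is normal.
-/

/-- The subgroups `L_n` of `H` from Theorem 1.2 of the paper (zero-based indexing, so
`Lseries φ (n-1)` is the paper's `L_n`): `L₁ = H` and
`L_{n+1} = ⟨K_{n+1}, H_{n+1}, [H, L_n]⟩` where
`K_{n+1} = ⟨φ(g)(h)h⁻¹ : g ∈ Γ_n(G), h ∈ H⟩` and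
`H_{n+1} = ⟨φ(g)(h)h⁻¹ : g ∈ G, h ∈ L_n⟩`. -/
def Lseries {G H : Type*} [Group G] [Group H] (φ : G →* MulAut H) : ℕ → Subgroup H
  | 0 => ⊤
  | n + 1 =>
      Subgroup.closure {x : H | ∃ g ∈ Subgroup.lowerCentralSeries (⊤ : Subgroup G) n, ∃ h : H, x = φ g h * h⁻¹} ⊔
      Subgroup.closure {x : H | ∃ g : G, ∃ h ∈ Lseries φ n, x = φ g h * h⁻¹} ⊔
      ⁅(⊤ : Subgroup H), Lseries φ n⁆

namespace Lseries

variable {G H : Type*} [Group G] [Group H] (φ : G →* MulAut H)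

theorem zero_eq : Lseries φ 0 = ⊤ := rfl

theorem commutator_top_le_succ (n : ℕ) : ⁅(⊤ : Subgroup H), Lseries φ n⁆ ≤ Lseries φ (n + 1) :=
  le_sup_right

theorem succ_le (n : ℕ) : Lseries φ (n + 1) ≤ Lseries φ n := by
  induction n with
  | zero => exact le_top
  | succ n ih =>
    refine sup_le_sup (sup_le_sup (Subgroup.closure_mono ?_) (Subgroup.closure_mono ?_))
      (Subgroup.commutator_mono le_rfl ih)
    · rintro x ⟨g, hg, h, rfl⟩
      exact ⟨g, Subgroup.lowerCentralSeries_antitone _ n.le_succ hg, h, rfl⟩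
    · rintro x ⟨g, h, hh, rfl⟩
      exact ⟨g, h, ih hh, rfl⟩

theorem normal (n : ℕ) : (Lseries φ n).Normal := by
  cases n with
  | zero => rw [zero_eq]; infer_instance
  | succ n =>
    rw [← Subgroup.commutator_top_left_le_iff]
    exact (Subgroup.commutator_mono le_rfl (succ_le φ n)).trans (commutator_top_le_succ φ n)

end Lseries

/-- Each `L_n` is a normal subgroup of `H`, and the `L_n` are decreasing. -/
theorem Lseries_normal_and_antitone {G H : Type*} [Group G] [Group H]
    (φ : G →* MulAut H) :
    ∀ n : ℕ, (Lseries φ n).Normal ∧ Lseries φ (n + 1) ≤ Lseries φ n :=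
  fun n ↦ ⟨Lseries.normal φ n, Lseries.succ_le φ n⟩
end

section
/- Let π₁(K) = ⟨a, b : a·b = b·a⁻¹⟩ be the Klein bottle group. Then for all n ≥ 2, the lower central series satisfies Γ_n(π₁(K)) = ⟨a^(2^(n−1))⟩. -/
/-- The single relation `b·a·b⁻¹·a = 1`, i.e. `b·a·b⁻¹ = a⁻¹`, of the Klein bottle group,
where `a = FreeGroup.of 0` and `b = FreeGroup.of 1`. -/
def kleinRels : Set (FreeGroup (Fin 2)) :=
  {FreeGroup.of 1 * FreeGroup.of 0 * (FreeGroup.of 1)⁻¹ * FreeGroup.of 0}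

/-- The Klein bottle group `π₁(𝕂) = ⟨a, b : b·a·b⁻¹ = a⁻¹⟩`. -/
abbrev KleinBottleGroup := PresentedGroup kleinRels

/-!
Every element `g` conjugates `a` to `a ^ w(g)`, where `w : π₁(K) → {±1}` is the orientation
character; this holds on the generators and is preserved by products and inverses. Hence
`⁅a ^ k, g⁆ = a ^ ((1 - w g) k)` lies in `⟨a ^ 2k⟩`, and equals `a ^ 2k` for `g = b`, so
`⁅⟨a ^ k⟩, G⁆ = ⟨a ^ 2k⟩`. For the start of the induction, `⁅a, b⁆ = a²` makes the images of the
two generators commute in `G ⧸ ⟨a²⟩`, which is therefore abelian, so `Γ₂ = ⟨a²⟩`.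
-/

open Subgroup

open scoped commutatorElement

section

variable {G : Type*} [Group G]

theorem conj_eq_zpow_of_closure_eq_top {S : Set G} (hS : closure S = ⊤) (χ : G →* ℤˣ) {x : G}
    (hχ : ∀ s ∈ S, s * x * s⁻¹ = x ^ (χ s : ℤ)) (g : G) : g * x * g⁻¹ = x ^ (χ g : ℤ) := by
  have hg : g ∈ closure S := hS ▸ mem_top g
  induction hg using closure_induction with
  | mem s hs => exact hχ s hs
  | one => simp
  | mul g h _ _ hg hh =>
    rw [map_mul, Units.val_mul, zpow_mul, ← hg, conj_zpow, ← hh]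
    group
  | inv g _ hg =>
    have hx : x = (g⁻¹ * x * g) ^ (χ g : ℤ) := by
      calc x = g⁻¹ * (g * x * g⁻¹) * g⁻¹⁻¹ := by group
        _ = (g⁻¹ * x * g) ^ (χ g : ℤ) := by rw [hg, ← conj_zpow, inv_inv]
    conv_rhs => rw [map_inv, Int.units_inv_eq_self, hx, ← zpow_mul, ← Units.val_mul,
      Int.units_mul_self, Units.val_one, zpow_one]
    rw [inv_inv]

theorem commutator_le_of_closure_pair_eq_top {N : Subgroup G} [N.Normal] {x y : G}
    (hxy : closure {x, y} = ⊤) (hN : ⁅x, y⁆ ∈ N) : commutator G ≤ N := by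
  rw [← Normal.quotient_commutative_iff_commutator_le]
  set f := QuotientGroup.mk' N
  have hcomm : f x * f y = f y * f x := by
    rw [← commutatorElement_eq_one_iff_mul_comm, ← map_commutatorElement,
      QuotientGroup.mk'_apply, QuotientGroup.eq_one_iff]
    exact hN
  have htop : closure {f x, f y} = ⊤ := by
    rw [← Set.image_pair, ← MonoidHom.map_closure, hxy,
      map_top_of_surjective _ (QuotientGroup.mk'_surjective N)]
  have := isMulCommutative_closure (k := {f x, f y}) (by
    rintro _ (rfl | rfl) _ (rfl | rfl) <;> first | rfl | exact hcomm | exact hcomm.symm)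
  rw [htop] at this
  refine .of_comm fun p q => ?_
  simpa using mul_comm' (⟨p, mem_top p⟩ : (⊤ : Subgroup _)) ⟨q, mem_top q⟩

end

namespace KleinBottleGroup

def a : KleinBottleGroup := PresentedGroup.of 0

def b : KleinBottleGroup := PresentedGroup.of 1

theorem b_mul_a_mul_b_inv : b * a * b⁻¹ = a⁻¹ :=
  eq_inv_of_mul_eq_one_left <| (QuotientGroup.eq_one_iff _).mpr <|
    subset_normalClosure rfl

theorem closure_a_b : closure {a, b} = ⊤ := by
  rw [← PresentedGroup.closure_range_of]
  congr 1
  ext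
  simp [Fin.exists_fin_two, a, b, eq_comm]

/-- The orientation character: `b` reverses the orientation of the Klein bottle, `a` preserves it. -/
def orientation : KleinBottleGroup →* ℤˣ :=
  PresentedGroup.toGroup (f := ![1, -1]) (by rintro _ rfl; decide)

theorem orientation_a : orientation a = 1 := rfl

theorem orientation_b : orientation b = -1 := rfl

theorem conj_a (g : KleinBottleGroup) : g * a * g⁻¹ = a ^ (orientation g : ℤ) := by
  refine conj_eq_zpow_of_closure_eq_top closure_a_b orientation ?_ g
  rintro _ (rfl | rfl)
  · simp [orientation_a]
  · simp [orientation_b, b_mul_a_mul_b_inv]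

theorem conj_a_zpow (g : KleinBottleGroup) (k : ℤ) :
    g * a ^ k * g⁻¹ = a ^ (orientation g * k) := by
  rw [← conj_zpow, conj_a, ← zpow_mul]

theorem commutatorElement_a_zpow (k : ℤ) (g : KleinBottleGroup) :
    ⁅a ^ k, g⁆ = a ^ ((1 - orientation g) * k) := by
  calc ⁅a ^ k, g⁆ = a ^ k * (g * a ^ (-k) * g⁻¹) := by group
    _ = a ^ ((1 - orientation g) * k) := by rw [conj_a_zpow, ← zpow_add]; ring_nf

theorem commutatorElement_a_zpow_b (k : ℤ) : ⁅a ^ k, b⁆ = a ^ (2 * k) := by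
  rw [commutatorElement_a_zpow, orientation_b]
  norm_num

instance normal_zpowers_a_zpow (k : ℤ) : (zpowers (a ^ k)).Normal where
  conj_mem := by
    rintro _ ⟨i, rfl⟩ g
    refine ⟨orientation g * i, ?_⟩
    simp only [← zpow_mul, conj_a_zpow]
    ring_nf

theorem commutator_zpowers_a_zpow_top (k : ℤ) :
    ⁅zpowers (a ^ k), ⊤⁆ = zpowers (a ^ (2 * k)) := by
  refine le_antisymm ?_ ?_
  · rw [commutator_le]
    rintro _ ⟨i, rfl⟩ g -
    dsimp only
    rw [← zpow_mul, commutatorElement_a_zpow]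
    rcases Int.units_eq_one_or (orientation g) with h | h <;> rw [h]
    · simp
    · exact ⟨i, by dsimp only; rw [← zpow_mul, Units.val_neg, Units.val_one]; ring_nf⟩
  · rw [zpowers_le, ← commutatorElement_a_zpow_b]
    exact commutator_mem_commutator (mem_zpowers _) (mem_top b)

theorem commutator_eq_zpowers_a_sq : commutator KleinBottleGroup = zpowers (a ^ (2 : ℤ)) := by
  have hab : ⁅a, b⁆ = a ^ (2 : ℤ) := by simpa using commutatorElement_a_zpow_b 1
  refine le_antisymm (commutator_le_of_closure_pair_eq_top closure_a_b ?_) ?_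
  · rw [hab]
    exact mem_zpowers _
  · rw [zpowers_le, ← hab]
    exact commutator_mem_commutator (mem_top a) (mem_top b)

theorem lowerCentralSeries_succ_eq_zpowers (m : ℕ) :
    (⊤ : Subgroup KleinBottleGroup).lowerCentralSeries (m + 1) =
      zpowers (a ^ (2 : ℤ) ^ (m + 1)) := by
  induction m with
  | zero => rw [zero_add, top_lowerCentralSeries_one, commutator_eq_zpowers_a_sq, pow_one]
  | succ m ih =>
    rw [Subgroup.lowerCentralSeries_succ, ih, commutator_zpowers_a_zpow_top, pow_succ' 2 (m + 1)]

end KleinBottleGroup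

/-- For all `n ≥ 2`, `Γ_n(π₁(𝕂)) = ⟨a^{2^{n-1}}⟩` (here `lowerCentralSeries _ (n-1)` is
the paper's `Γ_n`). -/
theorem lowerCentralSeries_kleinBottleGroup (n : ℕ) (hn : 2 ≤ n) :
    (⊤ : Subgroup KleinBottleGroup).lowerCentralSeries (n - 1) =
      Subgroup.zpowers ((PresentedGroup.of 0 : KleinBottleGroup) ^ 2 ^ (n - 1)) := by
  obtain ⟨m, hm⟩ : ∃ m, n - 1 = m + 1 := ⟨n - 2, by omega⟩
  rw [hm, KleinBottleGroup.lowerCentralSeries_succ_eq_zpowers, ← zpow_natCast]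
  push_cast
  rfl
end

section
/- Let G be a group, let A be a normal subgroup of H = G (or A = ∅), and for 1 ≤ l ≤ m define E_{l,m} to be the subgroup of H generated by all elements [x₁,…,x_i]^(2^(m−i−k)) with l ≤ i ≤ m, 0 ≤ k ≤ m−i, where x₁,…,x_i ∈ H and at least k of them lie in A (iterated right-nested commutators). Then [E_{l,m}, H] ⊆ E_{l+1,m+1}. -/
/-!
Let `N = E_{l+1,m+1}`, a normal subgroup because `A` is invariant under conjugation. For a
generator `c ^ 2 ^ q` of `E_{l,m}`, with `c = [x₁, …, x_i]` and `q = m - i - k`, prefixing `j`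
entries gives the generator `[y₁, …, y_j, x₁, …, x_i] ^ 2 ^ (q + 1 - j)` of `N`, so in `H ⧸ N`
all `[y₁, …, y_j, c] ^ 2 ^ (q + 1 - j)` vanish. Such a condition forces `c ^ 2 ^ q` to be
central, by induction on `q`: modulo the central elements of order two it holds with `q - 1`,
so each `[y, c ^ 2 ^ (q - 1)]` is central of order two, and then
`[y, c ^ 2 ^ q] = [y, c ^ 2 ^ (q - 1)] ^ 2 = 1`. Hence `E_{l,m}` is central modulo `N`.
-/

open scoped commutatorElement

/-- Right-nested iterated commutator: `nestedComm [x₁, …, x_i] = [x₁, [x₂, …, x_i]]`. -/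
def nestedComm {H : Type*} [Group H] : List H → H
  | [] => 1
  | [x] => x
  | x :: xs => ⁅x, nestedComm xs⁆

/-- The subgroup `E_{l,m}` of `H`, generated by all `[x₁, …, x_i]^{2^{m-i-k}}` with
`l ≤ i ≤ m`, `0 ≤ k ≤ m - i`, where at least `k` of the entries `x₁, …, x_i` lie in `A`. -/
def Esub {H : Type*} [Group H] (A : Set H) (l m : ℕ) : Subgroup H :=
  Subgroup.closure
    {z : H | ∃ (xs : List H) (k : ℕ) (S : Finset (Fin xs.length)),
      l ≤ xs.length ∧ xs.length ≤ m ∧ k ≤ m - xs.length ∧ k ≤ S.card ∧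
      (∀ j ∈ S, xs.get j ∈ A) ∧ z = nestedComm xs ^ 2 ^ (m - xs.length - k)}

open Subgroup

section Commutators

variable {G : Type*} [Group G]

theorem commutatorElement_pow_right_of_commute {y b : G} (h : Commute ⁅y, b⁆ b) (n : ℕ) :
    ⁅y, b ^ n⁆ = ⁅y, b⁆ ^ n := by
  have hconj : y * b * y⁻¹ = ⁅y, b⁆ * b := by rw [commutatorElement_def]; group
  rw [commutatorElement_def, ← conj_pow, hconj, h.mul_pow, mul_inv_cancel_right]

theorem mem_center_iff_forall_commutatorElement_eq_one {c : G} :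
    c ∈ center G ↔ ∀ y : G, ⁅y, c⁆ = 1 := by
  simp only [mem_center_iff, commutatorElement_eq_one_iff_mul_comm]

theorem QuotientGroup.mk_commutatorElement (N : Subgroup G) [N.Normal] (y c : G) :
    ((⁅y, c⁆ : G) : G ⧸ N) = ⁅(y : G ⧸ N), (c : G ⧸ N)⁆ :=
  map_commutatorElement (QuotientGroup.mk' N) y c

/-- `TwoPowCommBound q c` says that `[y₁, …, y_j, c] ^ 2 ^ (q + 1 - j) = 1` for all
`1 ≤ j ≤ q + 1` and all `y₁, …, y_j`. -/
def TwoPowCommBound : ℕ → G → Prop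
  | 0, c => c ∈ center G
  | q + 1, c => ∀ y : G, ⁅y, c⁆ ^ 2 ^ (q + 1) = 1 ∧ TwoPowCommBound q ⁅y, c⁆

variable (G) in
def centralInvolutions : Subgroup G where
  carrier := {x | x ∈ center G ∧ x ^ 2 = 1}
  one_mem' := ⟨one_mem _, one_pow 2⟩
  mul_mem' := by
    rintro a b ⟨ha, ha2⟩ ⟨hb, hb2⟩
    refine ⟨mul_mem ha hb, ?_⟩
    have hab : Commute a b := (mem_center_iff.mp ha b).symm
    rw [hab.mul_pow, ha2, hb2, one_mul]
  inv_mem' := by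
    rintro a ⟨ha, ha2⟩
    exact ⟨inv_mem ha, by rw [inv_pow, ha2, inv_one]⟩

instance : (centralInvolutions G).Normal :=
  ⟨fun n hn g => by rwa [mem_center_iff.mp hn.1 g, mul_inv_cancel_right]⟩

theorem TwoPowCommBound.mk_centralInvolutions {q : ℕ}
    (hcenter : ∀ j ≤ q, ∀ c : G, TwoPowCommBound j c → c ^ 2 ^ j ∈ center G)
    {c : G} (hc : TwoPowCommBound (q + 1) c) :
    TwoPowCommBound q (c : G ⧸ centralInvolutions G) := by
  induction q generalizing c with
  | zero =>
    rw [TwoPowCommBound, mem_center_iff_forall_commutatorElement_eq_one]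
    refine (QuotientGroup.induction_on · fun y => ?_)
    rw [← QuotientGroup.mk_commutatorElement, QuotientGroup.eq_one_iff]
    exact ⟨(hc y).2, by simpa using (hc y).1⟩
  | succ q ih =>
    refine (QuotientGroup.induction_on · fun y => ?_)
    obtain ⟨hpow, hy⟩ := hc y
    rw [← QuotientGroup.mk_commutatorElement, ← QuotientGroup.mk_pow, QuotientGroup.eq_one_iff]
    refine ⟨⟨hcenter (q + 1) le_rfl _ hy, ?_⟩, ih (fun j hj => hcenter j (by omega)) hy⟩
    rwa [← pow_mul, ← pow_succ]

theorem TwoPowCommBound.pow_mem_center {q : ℕ} {c : G} (hc : TwoPowCommBound q c) :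
    c ^ 2 ^ q ∈ center G := by
  induction q using Nat.strong_induction_on generalizing G with
  | _ q ih =>
  cases q with
  | zero => rwa [pow_zero, pow_one]
  | succ q =>
    have hbar := hc.mk_centralInvolutions fun j hj c hc => ih j (by omega) hc
    have hcomm := ih q (by omega) hbar
    rw [← QuotientGroup.mk_pow, mem_center_iff_forall_commutatorElement_eq_one] at hcomm
    rw [mem_center_iff_forall_commutatorElement_eq_one]
    intro y
    obtain ⟨hcent, hsq⟩ : ⁅y, c ^ 2 ^ q⁆ ∈ centralInvolutions G := by
      rw [← QuotientGroup.eq_one_iff, QuotientGroup.mk_commutatorElement]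
      exact hcomm y
    rw [pow_succ, pow_mul, commutatorElement_pow_right_of_commute
      (mem_center_iff.mp hcent _).symm, hsq]

end Commutators

section NestedComm

variable {G G' F : Type*} [Group G] [Group G'] [FunLike F G G'] [MonoidHomClass F G G']

theorem nestedComm_cons_of_ne_nil (a : G) {l : List G} (hl : l ≠ []) :
    nestedComm (a :: l) = ⁅a, nestedComm l⁆ := by
  cases l with
  | nil => exact absurd rfl hl
  | cons b t => rfl

theorem map_nestedComm (f : F) : ∀ l : List G, nestedComm (l.map f) = f (nestedComm l)
  | [] => map_one f |>.symm
  | [x] => rfl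
  | x :: y :: t => by
    rw [List.map_cons, nestedComm_cons_of_ne_nil _ (by simp), map_nestedComm f (y :: t),
      nestedComm_cons_of_ne_nil _ (List.cons_ne_nil y t), map_commutatorElement]

theorem nestedComm_append_nestedComm {zs : List G} (hzs : zs ≠ []) :
    ∀ ys : List G, nestedComm (ys ++ [nestedComm zs]) = nestedComm (ys ++ zs)
  | [] => rfl
  | a :: ys => by
    rw [List.cons_append, List.cons_append, nestedComm_cons_of_ne_nil _ (by simp),
      nestedComm_cons_of_ne_nil _ (by simp [hzs]), nestedComm_append_nestedComm hzs ys]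

theorem twoPowCommBound_of_nestedComm {q : ℕ} {c : G}
    (h : ∀ ys : List G, ys ≠ [] → ys.length ≤ q + 1 →
      nestedComm (ys ++ [c]) ^ 2 ^ (q + 1 - ys.length) = 1) :
    TwoPowCommBound q c := by
  induction q generalizing c with
  | zero =>
    exact mem_center_iff_forall_commutatorElement_eq_one.mpr fun y =>
      by simpa [nestedComm] using h [y] (List.cons_ne_nil y []) le_rfl
  | succ q ih =>
    refine fun y => ⟨by simpa [nestedComm] using h [y] (List.cons_ne_nil y []) (by simp), ih ?_⟩
    intro ys hys hlen
    have hcomm : ⁅y, c⁆ = nestedComm [y, c] := rfl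
    have := h (ys ++ [y]) (by simp) (by simp; omega)
    rw [List.append_assoc, List.length_append, List.length_singleton,
      show q + 1 + 1 - (ys.length + 1) = q + 1 - ys.length by omega] at this
    rwa [hcomm, nestedComm_append_nestedComm (List.cons_ne_nil y [c])]

end NestedComm

theorem Subgroup.closure_normal_of_forall_conj_mem {G : Type*} [Group G] {s : Set G}
    (hs : ∀ g : G, ∀ x ∈ s, g * x * g⁻¹ ∈ s) : (closure s).Normal := by
  refine normalizer_eq_top_iff.mp (eq_top_iff.mpr fun g _ => normalizer_le_normalizer_closure s ?_)
  refine mem_set_normalizer_iff.mpr fun x => ⟨hs g x, fun hx => ?_⟩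
  simpa [mul_assoc] using hs g⁻¹ _ hx

section Esub

variable {H : Type*} [Group H] {A : Set H} {l m : ℕ}

theorem nestedComm_pow_mem_Esub {k : ℕ} {xs : List H} (S : Finset (Fin xs.length))
    (hS : ∀ j ∈ S, xs.get j ∈ A) (hkS : k ≤ S.card) (hl : l ≤ xs.length)
    (hm : xs.length + k ≤ m) :
    nestedComm xs ^ 2 ^ (m - xs.length - k) ∈ Esub A l m :=
  subset_closure ⟨xs, k, S, hl, by omega, by omega, hkS, hS, rfl⟩

theorem Esub_normal (hA : ∀ g : H, ∀ a ∈ A, g * a * g⁻¹ ∈ A) (l m : ℕ) :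
    (Esub A l m).Normal := by
  refine Subgroup.closure_normal_of_forall_conj_mem ?_
  rintro g _ ⟨xs, k, S, hl, hm, hkm, hkS, hS, rfl⟩
  have hlen : (xs.map (MulAut.conj g)).length = xs.length := List.length_map _
  refine ⟨xs.map (MulAut.conj g), k, S.map (finCongr hlen.symm).toEmbedding, by omega, by omega,
    by omega, by rwa [Finset.card_map], ?_, ?_⟩
  · simp only [Finset.mem_map, Equiv.coe_toEmbedding, forall_exists_index, and_imp,
      forall_apply_eq_imp_iff₂]
    intro j hj
    simpa using hA g _ (hS j hj)
  · rw [hlen, map_nestedComm, MulAut.conj_apply, conj_pow]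

theorem nestedComm_append_pow_mem_Esub {k : ℕ} {xs ys : List H} (S : Finset (Fin xs.length))
    (hS : ∀ j ∈ S, xs.get j ∈ A) (hkS : k ≤ S.card) (hl : l ≤ xs.length) (hys : ys ≠ [])
    (hm : ys.length + xs.length + k ≤ m + 1) :
    nestedComm (ys ++ xs) ^ 2 ^ (m + 1 - (ys ++ xs).length - k) ∈ Esub A (l + 1) (m + 1) := by
  have hlen : (ys ++ xs).length = ys.length + xs.length := List.length_append
  refine nestedComm_pow_mem_Esub
    (S.map ((Fin.natAddEmb ys.length).trans (finCongr hlen.symm).toEmbedding)) ?_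
    (by rwa [Finset.card_map]) ?_ (by omega)
  · simp only [Finset.mem_map, Function.Embedding.trans_apply, Equiv.coe_toEmbedding,
      forall_exists_index, and_imp, forall_apply_eq_imp_iff₂]
    intro j hj
    simpa [List.getElem_append_right] using hS j hj
  · have := List.length_pos_iff.mpr hys
    omega

theorem Esub_le_upperCentralSeriesStep [(Esub A (l + 1) (m + 1)).Normal] :
    Esub A l m ≤ (Esub A (l + 1) (m + 1)).upperCentralSeriesStep := by
  rw [Subgroup.upperCentralSeriesStep_eq_comap_center, Esub, closure_le]
  rintro _ ⟨xs, k, S, hl, hm, hkm, hkS, hS, rfl⟩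
  rcases eq_or_ne xs [] with rfl | hxs
  · simp [nestedComm]
  rw [SetLike.mem_coe, mem_comap, map_pow]
  refine TwoPowCommBound.pow_mem_center (twoPowCommBound_of_nestedComm fun ys hys hlen => ?_)
  obtain ⟨ys, rfl⟩ := List.map_surjective_iff.mpr (QuotientGroup.mk'_surjective _) ys
  have hmap : ys.map (QuotientGroup.mk' _) ++ [QuotientGroup.mk' _ (nestedComm xs)] =
      (ys ++ [nestedComm xs]).map (QuotientGroup.mk' (Esub A (l + 1) (m + 1))) := by simp
  rw [hmap, map_nestedComm, nestedComm_append_nestedComm hxs, ← map_pow, QuotientGroup.mk'_apply,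
    QuotientGroup.eq_one_iff, List.length_map]
  rw [List.length_map] at hlen
  rw [ne_eq, List.map_eq_nil_iff] at hys
  convert nestedComm_append_pow_mem_Esub (m := m) S hS hkS hl hys (by omega) using 3
  rw [List.length_append]
  omega

end Esub

theorem commutator_Esub_le_general {H : Type*} [Group H] (A : Set H)
    (hA : A = ∅ ∨ ∃ N : Subgroup H, N.Normal ∧ A = ↑N)
    (l m : ℕ) :
    ⁅Esub A l m, (⊤ : Subgroup H)⁆ ≤ Esub A (l + 1) (m + 1) := by
  have hconj : ∀ g : H, ∀ a ∈ A, g * a * g⁻¹ ∈ A := by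
    rcases hA with rfl | ⟨N, hN, rfl⟩
    · simp
    · exact fun g a ha => hN.conj_mem a ha g
  have := Esub_normal hconj (l + 1) (m + 1)
  rw [commutator_le]
  exact fun g hg h _ => Esub_le_upperCentralSeriesStep hg h

/-- Corollary 5.9 of the paper: if `A` is empty or (the underlying set of) a normal
subgroup of `H`, then `[E_{l,m}, H] ⊆ E_{l+1,m+1}` for `1 ≤ l ≤ m`. -/
theorem commutator_Esub_le {H : Type*} [Group H] (A : Set H)
    (hA : A = ∅ ∨ ∃ N : Subgroup H, N.Normal ∧ A = ↑N)
    (l m : ℕ) (hl : 1 ≤ l) (hlm : l ≤ m) :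
    ⁅Esub A l m, (⊤ : Subgroup H)⁆ ≤ Esub A (l + 1) (m + 1) :=
  commutator_Esub_le_general A hA l m
end

section
/- Let H be a group and define Ẽ_{l,m} = ⟨[x₁,…,x_i]^(2^(m−i)) : x₁,…,x_i ∈ H, l ≤ i ≤ m⟩ using right-nested iterated commutators. Then for every h ∈ H, 1 ≤ i ≤ m, and x ∈ Γ_i(H) of the form x = [x₁,…,x_i], one has [x^(2^(m−i)), h] ≡ [x, h]^(2^(m−i)) modulo Ẽ_{i+1,m+1}. -/
/-!
Both factors already lie in `Ẽ = Ẽ_{i+1,m+1}`. For `[x, h]^{2^{m-i}} = [h, x]^{-2^{m-i}}` this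
holds because `[h, x] = [h, x₁, …, x_i]` has length `i + 1`. For `[x^{2^{m-i}}, h]`, work in
`Q = H ⧸ Ẽ` and call `c` of level `k` if `c^{2^k} = 1` and every `[a, c]` has level `k - 1`
(level `0` being `{1}`). By the choice of generators of `Ẽ`, every `[a, x]` has level `m - i`
in `Q`. The levels are closed under products and squaring lowers the level by one, so
`[a, c²] = u² [u⁻¹, v] v` (with `u = [a, c]`, `v = [c, u]`) has level `k` whenever all `[a, c]`
have level `k + 1`. After `m - i` squarings, `[a, x^{2^{m-i}}]` has level `0`.
-/

open scoped commutatorElement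

/-- The subgroup `Ẽ_{l,m} = ⟨[x₁, …, x_i]^{2^{m-i}} : x₁, …, x_i ∈ H, l ≤ i ≤ m⟩`. -/
def Etilde {H : Type*} [Group H] (l m : ℕ) : Subgroup H :=
  Subgroup.closure
    {z : H | ∃ xs : List H,
      l ≤ xs.length ∧ xs.length ≤ m ∧ z = nestedComm xs ^ 2 ^ (m - xs.length)}

section Etilde

variable {H K : Type*} [Group H] [Group K]

lemma nestedComm_cons_of_ne_nil_s14 (y : H) {ys : List H} (hys : ys ≠ []) :
    nestedComm (y :: ys) = ⁅y, nestedComm ys⁆ := by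
  cases ys with
  | nil => exact absurd rfl hys
  | cons _ _ => rfl

lemma map_nestedComm_s14 (f : H →* K) : ∀ xs : List H, f (nestedComm xs) = nestedComm (xs.map f)
  | [] => map_one f
  | [_] => rfl
  | x :: y :: ys => by
    rw [nestedComm_cons_of_ne_nil_s14 x (List.cons_ne_nil y ys), map_commutatorElement,
      map_nestedComm_s14 f (y :: ys)]
    rfl

lemma nestedComm_pow_mem_Etilde {l m : ℕ} (ys : List H) (hl : l ≤ ys.length)
    (hm : ys.length ≤ m) : nestedComm ys ^ 2 ^ (m - ys.length) ∈ Etilde l m :=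
  Subgroup.subset_closure ⟨ys, hl, hm, rfl⟩

lemma map_Etilde_le (f : H →* K) (l m : ℕ) : (Etilde l m).map f ≤ Etilde l m := by
  rw [Etilde, MonoidHom.map_closure, Subgroup.closure_le]
  rintro _ ⟨_, ⟨ys, hl, hm, rfl⟩, rfl⟩
  rw [map_pow, map_nestedComm_s14, ← List.length_map (f := f)]
  exact nestedComm_pow_mem_Etilde _ (by simpa using hl) (by simpa using hm)

instance Etilde_normal (l m : ℕ) : (Etilde l m : Subgroup H).Normal where
  conj_mem n hn g :=
    map_Etilde_le (MulAut.conj g).toMonoidHom l m ⟨n, hn, rfl⟩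

end Etilde

/-- `c ∈ torsionLevel G k` iff `[a_j, [a_{j-1}, …, [a_1, c]]] ^ 2 ^ (k - j) = 1` for all
`j ≤ k` and all `a_1, …, a_j ∈ G`. -/
def torsionLevel (G : Type*) [Group G] : ℕ → Set G
  | 0 => {1}
  | k + 1 => {c | c ^ 2 ^ (k + 1) = 1 ∧ ∀ a : G, ⁅a, c⁆ ∈ torsionLevel G k}

section TorsionLevel

variable {G : Type*} [Group G]

lemma mem_torsionLevel_zero {c : G} : c ∈ torsionLevel G 0 ↔ c = 1 := Iff.rfl

lemma pow_two_pow_eq_one_of_mem_torsionLevel {k : ℕ} {c : G} (hc : c ∈ torsionLevel G k) :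
    c ^ 2 ^ k = 1 := by
  cases k with
  | zero => rw [mem_torsionLevel_zero.mp hc, one_pow]
  | succ k => exact hc.1

lemma torsionLevel_subset_succ : ∀ k : ℕ, torsionLevel G k ⊆ torsionLevel G (k + 1)
  | 0, c, hc => by
    rw [mem_torsionLevel_zero.mp hc]
    exact ⟨one_pow _, fun a => commutatorElement_one_right a⟩
  | k + 1, _, hc =>
    ⟨by rw [pow_succ 2, pow_mul, hc.1, one_pow], fun a => torsionLevel_subset_succ k (hc.2 a)⟩

lemma commutatorElement_mem_torsionLevel {k : ℕ} (a : G) {c : G}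
    (hc : c ∈ torsionLevel G k) : ⁅a, c⁆ ∈ torsionLevel G k := by
  cases k with
  | zero =>
    rw [mem_torsionLevel_zero.mp hc, commutatorElement_one_right]
    exact Set.mem_singleton _
  | succ k => exact torsionLevel_subset_succ k (hc.2 a)

structure TorsionLevelClosed (G : Type*) [Group G] (k : ℕ) : Prop where
  mul_mem {c d : G} : c ∈ torsionLevel G k → d ∈ torsionLevel G k → c * d ∈ torsionLevel G k
  sq_mem {c : G} : c ∈ torsionLevel G (k + 1) → c ^ 2 ∈ torsionLevel G k

namespace TorsionLevelClosed

variable {k : ℕ}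

lemma commutatorElement_sq_mem (hk : TorsionLevelClosed G k) {a c : G}
    (h : ⁅a, c⁆ ∈ torsionLevel G (k + 1)) : ⁅a, c ^ 2⁆ ∈ torsionLevel G k := by
  have hv : ⁅c, ⁅a, c⁆⁆ ∈ torsionLevel G k := h.2 c
  have hid : ⁅a, c ^ 2⁆ = ⁅a, c⁆ ^ 2 * ⁅⁅a, c⁆⁻¹, ⁅c, ⁅a, c⁆⁆⁆ * ⁅c, ⁅a, c⁆⁆ := by
    simp only [commutatorElement_def, pow_two]; group
  rw [hid]
  exact hk.mul_mem (hk.mul_mem (hk.sq_mem h) (commutatorElement_mem_torsionLevel _ hv)) hv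

lemma sq_mem_succ (hk : TorsionLevelClosed G k) {c : G} (hc : c ∈ torsionLevel G (k + 2)) :
    c ^ 2 ∈ torsionLevel G (k + 1) :=
  ⟨by rw [← pow_mul, ← pow_succ', hc.1], fun _ => hk.commutatorElement_sq_mem (hc.2 _)⟩

lemma mul_mem_succ (hk : TorsionLevelClosed G k) {c d : G} (hc : c ∈ torsionLevel G (k + 1))
    (hd : d ∈ torsionLevel G (k + 1)) : c * d ∈ torsionLevel G (k + 1) := by
  have hsq : (c * d) ^ 2 ∈ torsionLevel G k := by
    have hid : (c * d) ^ 2 = c ^ 2 * ⁅c⁻¹, d⁆ * d ^ 2 := by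
      simp only [commutatorElement_def, pow_two]; group
    rw [hid]
    exact hk.mul_mem (hk.mul_mem (hk.sq_mem hc) (hd.2 _)) (hk.sq_mem hd)
  refine ⟨by rw [pow_succ', pow_mul, pow_two_pow_eq_one_of_mem_torsionLevel hsq], fun a => ?_⟩
  have hid : ⁅a, c * d⁆ = ⁅a, c⁆ * ⁅c, ⁅a, d⁆⁆ * ⁅a, d⁆ := by
    simp only [commutatorElement_def]; group
  rw [hid]
  exact hk.mul_mem (hk.mul_mem (hc.2 a) (commutatorElement_mem_torsionLevel _ (hd.2 a))) (hd.2 a)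

lemma succ (hk : TorsionLevelClosed G k) : TorsionLevelClosed G (k + 1) :=
  ⟨hk.mul_mem_succ, hk.sq_mem_succ⟩

end TorsionLevelClosed

lemma torsionLevelClosed : ∀ k : ℕ, TorsionLevelClosed G k
  | 0 => ⟨fun hc hd => by
      rw [mem_torsionLevel_zero.mp hc, mem_torsionLevel_zero.mp hd, mul_one]
      exact Set.mem_singleton _,
      fun hc => hc.1⟩
  | k + 1 => (torsionLevelClosed k).succ

lemma commutatorElement_pow_two_pow_mem_torsionLevel :
    ∀ (r k : ℕ) {b : G}, (∀ a : G, ⁅a, b⁆ ∈ torsionLevel G (k + r)) →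
      ∀ a : G, ⁅a, b ^ 2 ^ r⁆ ∈ torsionLevel G k
  | 0, _, _, hb, a => by simpa using hb a
  | r + 1, k, b, hb, a => by
    rw [pow_succ, pow_mul]
    exact (torsionLevelClosed k).commutatorElement_sq_mem
      (commutatorElement_pow_two_pow_mem_torsionLevel r (k + 1)
        (fun a => by rw [add_right_comm]; exact hb a) a)

end TorsionLevel

section Quotient

variable {H : Type*} [Group H] {l m : ℕ}

lemma mk_nestedComm_mem_torsionLevel :
    ∀ (n : ℕ) {ys : List H}, ys ≠ [] → l ≤ ys.length → ys.length + n = m →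
      QuotientGroup.mk' (Etilde l m) (nestedComm ys) ∈ torsionLevel (H ⧸ Etilde l m) n
  | 0, ys, _, hl, hm => by
    rw [mem_torsionLevel_zero, QuotientGroup.mk'_apply, QuotientGroup.eq_one_iff]
    have hgen := nestedComm_pow_mem_Etilde (m := m) ys hl (by omega)
    rwa [show m - ys.length = 0 by omega, pow_zero, pow_one] at hgen
  | n + 1, ys, hys, hl, hm => by
    refine ⟨?_, fun a => ?_⟩
    · rw [← map_pow, QuotientGroup.mk'_apply, QuotientGroup.eq_one_iff,
        show n + 1 = m - ys.length by omega]
      exact nestedComm_pow_mem_Etilde ys hl (by omega)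
    · obtain ⟨b, rfl⟩ := QuotientGroup.mk'_surjective _ a
      rw [← map_commutatorElement, ← nestedComm_cons_of_ne_nil_s14 b hys]
      exact mk_nestedComm_mem_torsionLevel n (List.cons_ne_nil _ _)
        (by simp only [List.length_cons]; omega) (by simp only [List.length_cons]; omega)

lemma commutatorElement_nestedComm_pow_mem_Etilde {r : ℕ} {xs : List H} (hxs : xs ≠ [])
    (hl : l ≤ xs.length + 1) (hm : xs.length + 1 + r = m) (a : H) :
    ⁅a, nestedComm xs ^ 2 ^ r⁆ ∈ Etilde l m := by
  rw [← QuotientGroup.eq_one_iff, ← QuotientGroup.mk'_apply, map_commutatorElement, map_pow,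
    ← mem_torsionLevel_zero]
  refine commutatorElement_pow_two_pow_mem_torsionLevel r 0 (fun b => ?_) _
  obtain ⟨b, rfl⟩ := QuotientGroup.mk'_surjective _ b
  rw [← map_commutatorElement, ← nestedComm_cons_of_ne_nil_s14 b hxs, zero_add]
  exact mk_nestedComm_mem_torsionLevel r (List.cons_ne_nil _ _) hl hm

end Quotient

/-- Lemma 5.8 of the paper (case `A = ∅`): for `1 ≤ i ≤ m`, `h ∈ H` and
`x = [x₁, …, x_i] ∈ Γ_i(H)`, one has `[x^{2^{m-i}}, h] ≡ [x, h]^{2^{m-i}}`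
modulo `Ẽ_{i+1,m+1}`. -/
theorem commutator_pow_congruence {H : Type*} [Group H] (h : H) (m i : ℕ)
    (hi : 1 ≤ i) (him : i ≤ m) (xs : List H) (hlen : xs.length = i) :
    ⁅nestedComm xs ^ 2 ^ (m - i), h⁆ * (⁅nestedComm xs, h⁆ ^ 2 ^ (m - i))⁻¹ ∈
      Etilde (i + 1) (m + 1) := by
  have hxs : xs ≠ [] := List.ne_nil_of_length_pos (by omega)
  refine mul_mem ?_ (inv_mem ?_)
  · rw [← commutatorElement_inv]
    exact inv_mem (commutatorElement_nestedComm_pow_mem_Etilde hxs (by omega) (by omega) h)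
  · have hgen := nestedComm_pow_mem_Etilde (l := i + 1) (m := m + 1) (h :: xs)
      (by simp [hlen]) (by simp [hlen, him])
    rw [nestedComm_cons_of_ne_nil_s14 h hxs, List.length_cons, hlen,
      Nat.add_sub_add_right] at hgen
    rw [← commutatorElement_inv, inv_pow]
    exact inv_mem hgen
end
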